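/- For every α ∈ (π/3, π) there exists an equilateral spherical triangle with angle α, i.e., a spherical triangle (x,y,z) whose three angles at the vertices x, y, z are all equal to α. -/

import Mathlib

/-- ℝ³ with the Euclidean inner product. -/
noncomputable abbrev E3 := EuclideanSpace ℝ (Fin 3)

/-- The unit tangent vector at `x` in the direction of `y`:
`x_y = (y - ⟨x,y⟩x)/‖y - ⟨x,y⟩x‖`. -/
noncomputable def sideUnit (x y : E3) : E3 :=
  ‖y - (inner ℝ x y : ℝ) • x‖⁻¹ • (y - (inner ℝ x y : ℝ) • x)

/-- The angle of the spherical triangle `(x,y,z)` at the vertex `x`. -/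
noncomputable def vertexAngle (x y z : E3) : ℝ :=
  Real.arccos (inner ℝ (sideUnit x y) (sideUnit x z) : ℝ)

/-!
If `x, y, z` are unit vectors with all pairwise inner products equal to `t`, then
`x_y = (y - t x)/√(1 - t²)` and likewise for `x_z`, so every angle of the triangle has cosine
`(t - t²)/(1 - t²) = t/(1 + t)`. As `t` runs over `(-1/2, 1)` this cosine runs over
`(-1, 1/2)`, i.e. the angle runs over `(π/3, π)`. For `-1/2 ≤ t ≤ 1` such a triple is
`a eᵢ + b (1, 1, 1)` with `a = √(1 - t)` and `a + 3b = √(1 + 2t)`, and it is linearly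
independent because its Gram determinant `(1 - t)² (1 + 2t)` is nonzero.
-/

open Real RealInnerProductSpace

section InnerProductSpace

variable {F : Type*} [NormedAddCommGroup F] [InnerProductSpace ℝ F]

structure IsEquiangularTriple (t : ℝ) (x y z : F) : Prop where
  norm_x : ‖x‖ = 1
  norm_y : ‖y‖ = 1
  norm_z : ‖z‖ = 1
  inner_xy : ⟪x, y⟫ = t
  inner_yz : ⟪y, z⟫ = t
  inner_zx : ⟪z, x⟫ = t

namespace IsEquiangularTriple

variable {t : ℝ} {x y z : F}

lemma inner_xz (h : IsEquiangularTriple t x y z) : ⟪x, z⟫ = t := by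
  rw [real_inner_comm, h.inner_zx]

lemma rotate (h : IsEquiangularTriple t x y z) : IsEquiangularTriple t y z x :=
  ⟨h.norm_y, h.norm_z, h.norm_x, h.inner_yz, h.inner_zx, h.inner_xy⟩

lemma det_gram (h : IsEquiangularTriple t x y z) :
    (Matrix.gram ℝ ![x, y, z]).det = (1 - t) ^ 2 * (1 + 2 * t) := by
  have hyx : ⟪y, x⟫ = t := by rw [real_inner_comm, h.inner_xy]
  have hzy : ⟪z, y⟫ = t := by rw [real_inner_comm, h.inner_yz]
  simp only [Matrix.det_fin_three, Matrix.gram_apply, Matrix.cons_val_zero, Matrix.cons_val_one,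
    Matrix.cons_val, inner_self_eq_norm_sq_to_K, ringHom_apply, h.norm_x, h.norm_y, h.norm_z,
    h.inner_xy, h.inner_yz, h.inner_zx, h.inner_xz, hyx, hzy]
  ring

lemma linearIndependent (h : IsEquiangularTriple t x y z) (ht₁ : t ≠ 1)
    (ht₂ : 1 + 2 * t ≠ 0) :
    LinearIndependent ℝ ![x, y, z] := by
  refine Matrix.linearIndependent_of_det_gram_ne_zero ?_
  rw [h.det_gram]
  exact mul_ne_zero (pow_ne_zero _ (sub_ne_zero.mpr ht₁.symm)) ht₂

end IsEquiangularTriple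

lemma norm_sub_inner_smul_sq {x y : F} (hx : ‖x‖ = 1) (hy : ‖y‖ = 1) :
    ‖y - ⟪x, y⟫ • x‖ ^ 2 = 1 - ⟪x, y⟫ ^ 2 := by
  rw [norm_sub_sq_real, real_inner_smul_right, norm_smul, real_inner_comm, hx, hy, norm_eq_abs,
    mul_pow, sq_abs]
  ring

lemma inner_sub_inner_smul_sub_inner_smul {x y z : F} (hx : ‖x‖ = 1) :
    ⟪y - ⟪x, y⟫ • x, z - ⟪x, z⟫ • x⟫ = ⟪y, z⟫ - ⟪x, y⟫ * ⟪x, z⟫ := by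
  simp only [inner_sub_left, inner_sub_right, real_inner_smul_left, real_inner_smul_right,
    real_inner_self_eq_norm_sq, hx, real_inner_comm x y]
  ring

end InnerProductSpace

namespace IsEquiangularTriple

variable {t : ℝ} {x y z : E3}

lemma inner_sideUnit (h : IsEquiangularTriple t x y z) (ht₁ : -1 < t) (ht₂ : t < 1) :
    ⟪sideUnit x y, sideUnit x z⟫ = t / (1 + t) := by
  have hpos : 0 < 1 - t ^ 2 := by nlinarith
  have hny := norm_sub_inner_smul_sq h.norm_x h.norm_y
  have hnz := norm_sub_inner_smul_sq h.norm_x h.norm_z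
  have hyz := inner_sub_inner_smul_sub_inner_smul (y := y) (z := z) h.norm_x
  rw [h.inner_xy] at hny hyz
  rw [h.inner_xz] at hnz hyz
  rw [h.inner_yz] at hyz
  unfold sideUnit
  rw [real_inner_smul_left, real_inner_smul_right, h.inner_xy, h.inner_xz, hyz,
    ← sqrt_sq (norm_nonneg (y - _)), ← sqrt_sq (norm_nonneg (z - _)), hny, hnz]
  have hsq : √(1 - t ^ 2) ^ 2 = 1 - t ^ 2 := sq_sqrt hpos.le
  have hne : √(1 - t ^ 2) ≠ 0 := (sqrt_pos.mpr hpos).ne'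
  have h1t : 1 + t ≠ 0 := by linarith
  field_simp
  linear_combination (-t) * hsq

lemma vertexAngle_eq (h : IsEquiangularTriple t x y z) (ht₁ : -1 < t) (ht₂ : t < 1) :
    vertexAngle x y z = arccos (t / (1 + t)) := by
  rw [vertexAngle, h.inner_sideUnit ht₁ ht₂]

end IsEquiangularTriple

lemma exists_isEquiangularTriple {t : ℝ} (ht₁ : -1 / 2 ≤ t) (ht₂ : t ≤ 1) :
    ∃ x y z : E3, IsEquiangularTriple t x y z := by
  set a := √(1 - t)
  set s := √(1 + 2 * t)
  have ha : a ^ 2 = 1 - t := sq_sqrt (by linarith)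
  have hs : s ^ 2 = 1 + 2 * t := sq_sqrt (by linarith)
  set b := (s - a) / 3
  have hself : (a + b) ^ 2 + b ^ 2 + b ^ 2 = 1 := by linear_combination (2 * ha + hs) / 3
  have hcross : (a + b) * b + b * (a + b) + b ^ 2 = t := by linear_combination (hs - ha) / 3
  refine ⟨!₂[a + b, b, b], !₂[b, a + b, b], !₂[b, b, a + b], ?_, ?_, ?_, ?_, ?_, ?_⟩ <;>
    simp only [EuclideanSpace.norm_eq, norm_eq_abs, sq_abs, sqrt_eq_one, PiLp.inner_apply,
      RCLike.inner_apply, ringHom_apply, Fin.sum_univ_three, Matrix.cons_val_zero,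
      Matrix.cons_val_one, Matrix.cons_val] <;>
    first | linear_combination hself | linear_combination hcross

lemma cos_mem_Ioo_of_mem_Ioo {α : ℝ} (hα : α ∈ Set.Ioo (π / 3) π) :
    cos α ∈ Set.Ioo (-1) (1 / 2) := by
  obtain ⟨h₁, h₂⟩ := hα
  constructor
  · simpa using cos_lt_cos_of_nonneg_of_le_pi (by linarith [pi_pos]) le_rfl h₂
  · simpa using cos_lt_cos_of_nonneg_of_le_pi (by positivity) h₂.le h₁

lemma exists_div_one_add_eq {c : ℝ} (hc : c ∈ Set.Ioo (-1) (1 / 2)) :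
    ∃ t ∈ Set.Ioo (-1 / 2) 1, t / (1 + t) = c := by
  obtain ⟨h₁, h₂⟩ := hc
  have h : 0 < 1 - c := by linarith
  refine ⟨c / (1 - c), ⟨?_, ?_⟩, ?_⟩
  · rw [lt_div_iff₀ h]; linarith
  · rw [div_lt_one h]; linarith
  · field_simp; ring

/-- for every `α ∈ (π/3, π)` there exists an equilateral spherical
triangle all of whose angles equal `α`. -/
theorem equilateral_spherical_triangle_exists (α : ℝ)
    (hα : α ∈ Set.Ioo (Real.pi / 3) Real.pi) :
    ∃ x y z : E3, ‖x‖ = 1 ∧ ‖y‖ = 1 ∧ ‖z‖ = 1 ∧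
      LinearIndependent ℝ ![x, y, z] ∧
      vertexAngle x y z = α ∧ vertexAngle y z x = α ∧ vertexAngle z x y = α := by
  obtain ⟨t, ⟨ht₁, ht₂⟩, htα⟩ := exists_div_one_add_eq (cos_mem_Ioo_of_mem_Ioo hα)
  obtain ⟨x, y, z, h⟩ := exists_isEquiangularTriple ht₁.le ht₂.le
  have hangle : arccos (t / (1 + t)) = α := by
    rw [htα, arccos_cos (by linarith [hα.1, pi_pos]) hα.2.le]
  have ht₀ : -1 < t := by linarith
  refine ⟨x, y, z, h.norm_x, h.norm_y, h.norm_z, h.linearIndependent ht₂.ne (by linarith),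
    ?_, ?_, ?_⟩
  · rw [h.vertexAngle_eq ht₀ ht₂, hangle]
  · rw [h.rotate.vertexAngle_eq ht₀ ht₂, hangle]
  · rw [h.rotate.rotate.vertexAngle_eq ht₀ ht₂, hangle]
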